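/- Both squared frequencies ν_fast² and ν_slow² of the double pendulum are strictly positive for m1, m2, l1, l2, g > 0. -/

import Mathlib

open Real

lemma Real.sqrt_sq_sub_lt {s d : ℝ} (hs : 0 < s) (hd : 0 < d) : √(s ^ 2 - d) < s :=
  (Real.sqrt_lt' hs).2 (by linarith)

theorem freq_squared_pos
    (m1 m2 l1 l2 g : ℝ) (hm1 : 0 < m1) (hm2 : 0 < m2)
    (hl1 : 0 < l1) (hl2 : 0 < l2) (hg : 0 < g) :
    0 < g * (m1 + m2) / (8 * Real.pi ^ 2 * m1 * l1 * l2) *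
        ((l1 + l2) + Real.sqrt ((l1 + l2) ^ 2 - 4 * m1 * l1 * l2 / (m1 + m2))) ∧
    0 < g * (m1 + m2) / (8 * Real.pi ^ 2 * m1 * l1 * l2) *
        ((l1 + l2) - Real.sqrt ((l1 + l2) ^ 2 - 4 * m1 * l1 * l2 / (m1 + m2))) := by
  have hprefactor : 0 < g * (m1 + m2) / (8 * π ^ 2 * m1 * l1 * l2) := by
    have := Real.pi_pos
    positivity
  have hl : 0 < l1 + l2 := add_pos hl1 hl2
  have hsqrt_lt : √((l1 + l2) ^ 2 - 4 * m1 * l1 * l2 / (m1 + m2)) < l1 + l2 :=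
    Real.sqrt_sq_sub_lt hl (by positivity)
  exact ⟨mul_pos hprefactor (add_pos_of_pos_of_nonneg hl (Real.sqrt_nonneg _)),
    mul_pos hprefactor (sub_pos.2 hsqrt_lt)⟩
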